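/- arXiv:1506.01448 — 6 statements merged into one kernel-verified Lean document; each statement's English description precedes it below -/
import Mathlib

section
/- Let A and B be unital C*-algebras and φ : A → B a completely positive contractive map such that φ(1)φ(x*x) = φ(x)*φ(x) for all x ∈ A. Then φ is order zero: for all positive elements x, y ∈ A with xy = 0, one has φ(x)φ(y) = 0. -/
/-!
Expanding `φ(1) φ((x + y)*(x + y)) = φ(x + y)* φ(x + y)` with `x* y = 0` leaves only the cross
terms, so `φ x` and `φ y` anticommute. For positive `a`, `a b = -b a` makes `b` commute with `a²`,
hence with `a = √(a²)`, and then `2 a b = 0`.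
-/

/-- A matrix over a star ring is "positive" if it factors as `star Y * Y`. -/
def MatrixStarPos {R : Type*} [NonUnitalSemiring R] [StarRing R] {n : ℕ}
    (M : Matrix (Fin n) (Fin n) R) : Prop :=
  ∃ Y : Matrix (Fin n) (Fin n) R, M = star Y * Y

theorem matrixStarPos_fin_one_iff {R : Type*} [NonUnitalSemiring R] [StarRing R]
    {M : Matrix (Fin 1) (Fin 1) R} : MatrixStarPos M ↔ ∃ z : R, M 0 0 = star z * z := by
  constructor
  · rintro ⟨Y, rfl⟩
    exact ⟨Y 0 0, by simp [Matrix.mul_apply]⟩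
  · rintro ⟨z, hz⟩
    refine ⟨Matrix.of fun _ _ => z, ?_⟩
    ext i j
    fin_cases i; fin_cases j
    simpa [Matrix.mul_apply] using hz

theorem nonneg_apply_of_forall_matrixStarPos {A B : Type*}
    [NonUnitalCStarAlgebra A] [PartialOrder A] [StarOrderedRing A]
    [NonUnitalRing B] [StarRing B] [PartialOrder B] [StarOrderedRing B] (f : A → B)
    (hf : ∀ M : Matrix (Fin 1) (Fin 1) A, MatrixStarPos M → MatrixStarPos (M.map f))
    {a : A} (ha : 0 ≤ a) : 0 ≤ f a := by
  obtain ⟨b, rfl⟩ := CStarAlgebra.nonneg_iff_eq_star_mul_self.mp ha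
  obtain ⟨z, hz⟩ := matrixStarPos_fin_one_iff.mp <|
    hf (Matrix.of fun _ _ => star b * b) (matrixStarPos_fin_one_iff.mpr ⟨b, rfl⟩)
  have hfz : f (star b * b) = star z * z := by simpa using hz
  exact hfz ▸ star_mul_self_nonneg z

theorem star_map_mul_map_add_star_map_mul_map_eq_zero {A B : Type*}
    [Ring A] [StarRing A] [NonUnitalRing B] [StarRing B] (φ : A →+ B)
    (hmult : ∀ x : A, φ 1 * φ (star x * x) = star (φ x) * φ x)
    {x y : A} (hxy : star x * y = 0) :
    star (φ x) * φ y + star (φ y) * φ x = 0 := by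
  have hyx : star y * x = 0 := by simpa using congrArg star hxy
  have hsum : star (x + y) * (x + y) = star x * x + star y * y := by
    simp only [star_add, add_mul, mul_add, hxy, hyx]
    abel
  have h := hmult (x + y)
  rw [hsum, map_add, mul_add, hmult x, hmult y, map_add, star_add] at h
  simp only [add_mul, mul_add] at h
  calc star (φ x) * φ y + star (φ y) * φ x
      = (star (φ x) * φ x + star (φ y) * φ x + (star (φ x) * φ y + star (φ y) * φ y))
          - (star (φ x) * φ x + star (φ y) * φ y) := by abel
    _ = 0 := by rw [← h, sub_self]

theorem mul_eq_zero_of_mul_add_mul_eq_zero {A : Type*}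
    [NonUnitalCStarAlgebra A] [PartialOrder A] [StarOrderedRing A]
    {a b : A} (ha : 0 ≤ a) (h : a * b + b * a = 0) : a * b = 0 := by
  have hsq : Commute (a * a) b := by
    have hab : a * b = -(b * a) := eq_neg_of_add_eq_zero_left h
    calc a * a * b = -(a * (b * a)) := by rw [mul_assoc, hab, mul_neg]
      _ = b * (a * a) := by rw [← mul_assoc, hab, neg_mul, neg_neg, mul_assoc]
  have hcomm : Commute (CFC.sqrt (a * a)) b := hsq.cfcₙ_nnreal NNReal.sqrt
  rw [CFC.sqrt_mul_self a ha] at hcomm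
  have h2 : (2 : ℂ) • (a * b) = 0 := by
    rw [two_smul]
    rwa [← hcomm.eq] at h
  exact (smul_eq_zero.mp h2).resolve_left two_ne_zero

theorem cpc_with_multiplicative_identity_is_order_zero_general
    {A B : Type*} [NormedRing A] [StarRing A] [CStarRing A]
    [NormedAlgebra ℂ A] [StarModule ℂ A] [CompleteSpace A]
    [PartialOrder A] [StarOrderedRing A]
    [NormedRing B] [StarRing B] [CStarRing B]
    [NormedAlgebra ℂ B] [StarModule ℂ B] [CompleteSpace B]
    (φ : A →ₗ[ℂ] B)
    (hcp : ∀ (n : ℕ) (M : Matrix (Fin n) (Fin n) A),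
      MatrixStarPos M → MatrixStarPos (M.map φ))
    (hmult : ∀ x : A, φ 1 * φ (star x * x) = star (φ x) * φ x)
    (x y : A) (hx : 0 ≤ x) (hy : 0 ≤ y) (hxy : x * y = 0) :
    φ x * φ y = 0 := by
  let _ : CStarAlgebra A := { }
  let _ : CStarAlgebra B := { }
  let _ : PartialOrder B := CStarAlgebra.spectralOrder B
  have _ : StarOrderedRing B := CStarAlgebra.spectralOrderedRing B
  have hφ {a : A} (ha : 0 ≤ a) : 0 ≤ φ a := nonneg_apply_of_forall_matrixStarPos φ (hcp 1) ha
  have hanti := star_map_mul_map_add_star_map_mul_map_eq_zero φ.toAddMonoidHom hmult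
    (x := x) (y := y) (by rwa [hx.isSelfAdjoint.star_eq])
  rw [LinearMap.toAddMonoidHom_coe, (hφ hx).isSelfAdjoint.star_eq,
    (hφ hy).isSelfAdjoint.star_eq] at hanti
  exact mul_eq_zero_of_mul_add_mul_eq_zero (hφ hx) hanti

/-- A c.p.c. map `φ` with `φ(1) φ(x*x) = φ(x)* φ(x)` is order zero. -/
theorem cpc_with_multiplicative_identity_is_order_zero
    {A B : Type*} [NormedRing A] [StarRing A] [CStarRing A]
    [NormedAlgebra ℂ A] [StarModule ℂ A] [CompleteSpace A]
    [PartialOrder A] [StarOrderedRing A]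
    [NormedRing B] [StarRing B] [CStarRing B]
    [NormedAlgebra ℂ B] [StarModule ℂ B] [CompleteSpace B]
    (φ : A →ₗ[ℂ] B)
    (hcontr : ∀ x : A, ‖φ x‖ ≤ ‖x‖)
    (hcp : ∀ (n : ℕ) (M : Matrix (Fin n) (Fin n) A),
      MatrixStarPos M → MatrixStarPos (M.map φ))
    (hmult : ∀ x : A, φ 1 * φ (star x * x) = star (φ x) * φ x)
    (x y : A) (hx : 0 ≤ x) (hy : 0 ≤ y) (hxy : x * y = 0) :
    φ x * φ y = 0 :=
  cpc_with_multiplicative_identity_is_order_zero_general φ hcp hmult x y hx hy hxy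
end

section
/- Let A be a unital C*-algebra, σ : Mₚ → A a unital *-homomorphism from the p×p matrix algebra, τ a tracial state on A, a ∈ σ(Mₚ), and b an element of A commuting with every element of σ(Mₚ). Then τ(ab) = τ(a)τ(b). -/
open scoped ComplexOrder

/-! The functionals `m ↦ τ (σ m * b)` and `m ↦ τ (σ m)` on `Mₚ` vanish on commutators, because `b`
commutes with `σ(Mₚ)`. Such a functional is a multiple of the trace: `Eᵢⱼ = Eᵢⱼ Eⱼⱼ` and
`Eⱼⱼ Eᵢⱼ = 0` for `i ≠ j`, while `Eᵢᵢ = Eᵢⱼ Eⱼᵢ` and `Eⱼⱼ = Eⱼᵢ Eᵢⱼ` take the same value.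
Evaluating both at `1` fixes the multiples as `τ b / p` and `1 / p`. -/

namespace Matrix

variable {n R M : Type*} [Fintype n] [DecidableEq n] [Semiring R] [AddCommMonoid M] [Module R M]
  {φ : Matrix n n R →ₗ[R] M}

theorem map_single_one_eq_of_tracial (hφ : ∀ x y, φ (x * y) = φ (y * x)) (i j : n) :
    φ (single i i 1) = φ (single j j 1) := by
  simpa only [single_mul_single_same, one_mul] using hφ (single i j 1) (single j i 1)

theorem map_single_eq_zero_of_tracial (hφ : ∀ x y, φ (x * y) = φ (y * x)) {i j : n} (hij : i ≠ j)
    (c : R) : φ (single i j c) = 0 := by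
  have h := hφ (single i j c) (single j j 1)
  rwa [single_mul_single_same, mul_one, single_mul_single_of_ne 1 j j i hij.symm, map_zero] at h

theorem card_smul_map_eq_trace_smul_map_one_of_tracial (hφ : ∀ x y, φ (x * y) = φ (y * x))
    (x : Matrix n n R) : Fintype.card n • φ x = x.trace • φ 1 := by
  induction x using Matrix.induction_on' with
  | h_zero => simp
  | h_add x y hx hy => simp only [map_add, smul_add, hx, hy, trace_add, add_smul]
  | h_std_basis i j c =>
    rcases eq_or_ne i j with rfl | hij
    · have hone : φ 1 = Fintype.card n • φ (single i i 1) := by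
        rw [← sum_single_one, map_sum, Finset.sum_congr rfl fun k _ =>
          map_single_one_eq_of_tracial hφ k i, Finset.sum_const, Finset.card_univ]
      have hc : single i i c = c • single i i 1 := by rw [smul_single, smul_eq_mul, mul_one]
      rw [trace_single_eq_same, hc, map_smul, hone, smul_comm]
    · rw [map_single_eq_zero_of_tracial hφ hij, trace_single_eq_of_ne _ _ _ hij, smul_zero,
        zero_smul]

end Matrix

theorem card_smul_map_mul_eq_trace_smul_of_commute {n R A M : Type*} [Fintype n] [DecidableEq n]
    [CommSemiring R] [Semiring A] [Algebra R A] [AddCommMonoid M] [Module R M]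
    (σ : Matrix n n R →ₐ[R] A) {τ : A →ₗ[R] M} (hτ : ∀ x y, τ (x * y) = τ (y * x)) {b : A}
    (hb : ∀ m, Commute (σ m) b) (x : Matrix n n R) :
    Fintype.card n • τ (σ x * b) = x.trace • τ b := by
  let φ : Matrix n n R →ₗ[R] M := τ ∘ₗ LinearMap.mulRight R b ∘ₗ σ.toLinearMap
  have hφ : ∀ x y, φ (x * y) = φ (y * x) := fun x y => by
    change τ (σ (x * y) * b) = τ (σ (y * x) * b)
    rw [map_mul σ, map_mul σ, mul_assoc, hτ, mul_assoc, ← (hb x).eq, mul_assoc]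
  simpa [φ] using Matrix.card_smul_map_eq_trace_smul_map_one_of_tracial hφ x

theorem trace_mul_eq_trace_mul_trace_of_matrix_subalgebra_general
    {A : Type*} [NormedRing A] [StarRing A]
    [NormedAlgebra ℂ A]
    (p : ℕ) (hp : 0 < p)
    (σ : Matrix (Fin p) (Fin p) ℂ →⋆ₐ[ℂ] A)
    (τ : A →ₗ[ℂ] ℂ)
    (hτ1 : τ 1 = 1)
    (hτtr : ∀ x y : A, τ (x * y) = τ (y * x))
    (a b : A)
    (ha : a ∈ Set.range σ)
    (hb : ∀ m : Matrix (Fin p) (Fin p) ℂ, Commute (σ m) b) :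
    τ (a * b) = τ a * τ b := by
  obtain ⟨m, rfl⟩ := ha
  have hmb := card_smul_map_mul_eq_trace_smul_of_commute σ.toAlgHom hτtr hb m
  have hm1 := card_smul_map_mul_eq_trace_smul_of_commute σ.toAlgHom hτtr
    (fun _ => Commute.one_right _) m
  simp only [StarAlgHom.coe_toAlgHom, Fintype.card_fin, nsmul_eq_mul, smul_eq_mul, mul_one,
    hτ1] at hmb hm1
  have hp' : (p : ℂ) ≠ 0 := Nat.cast_ne_zero.mpr hp.ne'
  apply mul_left_cancel₀ hp'
  rw [hmb, ← mul_assoc, hm1]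

/-- If `σ : M_p → A` is a unital *-homomorphism, `τ` a tracial state,
`a ∈ σ(M_p)` and `b` commutes with `σ(M_p)`, then `τ(ab) = τ(a)τ(b)`. -/
theorem trace_mul_eq_trace_mul_trace_of_matrix_subalgebra
    {A : Type*} [NormedRing A] [StarRing A] [CStarRing A]
    [NormedAlgebra ℂ A] [StarModule ℂ A] [CompleteSpace A]
    (p : ℕ) (hp : 0 < p)
    (σ : Matrix (Fin p) (Fin p) ℂ →⋆ₐ[ℂ] A)
    (τ : A →ₗ[ℂ] ℂ)
    (hτ1 : τ 1 = 1)
    (hτpos : ∀ x : A, 0 ≤ τ (star x * x))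
    (hτtr : ∀ x y : A, τ (x * y) = τ (y * x))
    (a b : A)
    (ha : a ∈ Set.range σ)
    (hb : ∀ m : Matrix (Fin p) (Fin p) ℂ, Commute (σ m) b) :
    τ (a * b) = τ a * τ b :=
  trace_mul_eq_trace_mul_trace_of_matrix_subalgebra_general p hp σ τ hτ1 hτtr a b ha hb
end

section
/- Kirchberg's ε-test: Let ω be a free ultrafilter on ℕ, let X₁, X₂, … be nonempty sets, and for each k ∈ ℕ let (fₙ^{(k)})ₙ be functions fₙ^{(k)} : Xₙ → [0, ∞). Define f_ω^{(k)} : ∏ₙ Xₙ → [0, ∞] by f_ω^{(k)}(s₁, s₂, …) = lim_{n→ω} fₙ^{(k)}(sₙ). Suppose for every m ∈ ℕ and ε > 0 there exists s ∈ ∏ₙ Xₙ with f_ω^{(k)}(s) < ε for all 1 ≤ k ≤ m. Then there exists t ∈ ∏ₙ Xₙ with f_ω^{(k)}(t) = 0 for all k ∈ ℕ. -/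
/-!
Choose, for each `m`, a point `s m` at which the first `m` functions are eventually below `ε m`,
where `ε m → 0`. Along the filter, the index `g n` = "largest `m ≤ n` for which `s m` is good at
`n`" tends to infinity, so the diagonal point `n ↦ s (g n) n` drives every function to `0`.
-/

open Filter Topology
open scoped NNReal ENNReal

theorem Filter.exists_tendsto_atTop_eventually_diagonal {l : Filter ℕ} (hl : l ≤ cofinite)
    {p : ℕ → ℕ → Prop} (h : ∀ m, ∀ᶠ n in l, p m n) :
    ∃ g : ℕ → ℕ, Tendsto g l atTop ∧ ∀ᶠ n in l, p (g n) n := by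
  classical
  refine ⟨fun n => Nat.findGreatest (p · n) n, tendsto_atTop.2 fun M => ?_, ?_⟩
  · have hM : ∀ᶠ n in l, M ≤ n := hl (Nat.cofinite_eq_atTop ▸ eventually_ge_atTop M)
    filter_upwards [h M, hM] with n hpn hMn using Nat.le_findGreatest hMn hpn
  · filter_upwards [h 0] with n hn using Nat.findGreatest_spec (P := (p · n)) n.zero_le hn

theorem exists_forall_tendsto_zero_of_forall_limsup_lt {X : ℕ → Type*} {l : Filter ℕ}
    (hl : l ≤ cofinite) (F : ℕ → (n : ℕ) → X n → ℝ≥0∞)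
    (h : ∀ m, ∀ ε : ℝ≥0, 0 < ε →
      ∃ s : ∀ n, X n, ∀ k ≤ m, limsup (fun n => F k n (s n)) l < ε) :
    ∃ t : ∀ n, X n, ∀ k, Tendsto (fun n => F k n (t n)) l (𝓝 0) := by
  obtain ⟨ε, -, ε_pos, ε_lim⟩ := exists_seq_strictAnti_tendsto (0 : ℝ≥0)
  choose s hs using fun m => h m (ε m) (ε_pos m)
  have hgood : ∀ m, ∀ᶠ n in l, ∀ k ≤ m, F k n (s m n) < ε m := fun m =>
    (Set.finite_le_nat m).eventually_all.2 fun k hk => eventually_lt_of_limsup_lt (hs m k hk)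
  obtain ⟨g, hg, hg_good⟩ := exists_tendsto_atTop_eventually_diagonal hl hgood
  refine ⟨fun n => s (g n) n, fun k => ?_⟩
  have hε : Tendsto (fun n => (ε (g n) : ℝ≥0∞)) l (𝓝 0) := by
    simpa using ENNReal.tendsto_coe.2 (ε_lim.comp hg)
  refine tendsto_of_tendsto_of_tendsto_of_le_of_le' tendsto_const_nhds hε
    (Eventually.of_forall fun _ => zero_le) ?_
  filter_upwards [hg_good, hg.eventually_ge_atTop k] with n hn hkn using (hn k hkn).le

theorem kirchberg_epsilon_test_general
    (ω : Ultrafilter ℕ) (hω : (ω : Filter ℕ) ≤ Filter.cofinite)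
    (X : ℕ → Type*)
    (f : (k : ℕ) → (n : ℕ) → X n → ℝ)
    (h : ∀ m : ℕ, ∀ ε : ℝ, 0 < ε →
      ∃ s : ∀ n, X n, ∀ k ≤ m,
        Filter.limsup (fun n => ENNReal.ofReal (f k n (s n))) (ω : Filter ℕ)
          < ENNReal.ofReal ε) :
    ∃ t : ∀ n, X n, ∀ k : ℕ,
      Filter.limsup (fun n => ENNReal.ofReal (f k n (t n))) (ω : Filter ℕ)
        = 0 := by
  have h_nnreal : ∀ m, ∀ ε : ℝ≥0, 0 < ε → ∃ s : ∀ n, X n, ∀ k ≤ m,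
      limsup (fun n => ENNReal.ofReal (f k n (s n))) (ω : Filter ℕ) < ε := fun m ε hε => by
    simpa only [ENNReal.ofReal_coe_nnreal] using h m ε (NNReal.coe_pos.2 hε)
  obtain ⟨t, ht⟩ := exists_forall_tendsto_zero_of_forall_limsup_lt hω
    (fun k n x => ENNReal.ofReal (f k n x)) h_nnreal
  exact ⟨t, fun k => (ht k).limsup_eq⟩

/-- Kirchberg's ε-test: if every finite family of the limit functions
`f_ω^{(k)}` can simultaneously be made smaller than any `ε > 0`, then some
point makes all of them vanish. -/
theorem kirchberg_epsilon_test
    (ω : Ultrafilter ℕ) (hω : (ω : Filter ℕ) ≤ Filter.cofinite)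
    (X : ℕ → Type*) (hX : ∀ n, Nonempty (X n))
    (f : (k : ℕ) → (n : ℕ) → X n → ℝ) (hf : ∀ k n x, 0 ≤ f k n x)
    (h : ∀ m : ℕ, ∀ ε : ℝ, 0 < ε →
      ∃ s : ∀ n, X n, ∀ k ≤ m,
        Filter.limsup (fun n => ENNReal.ofReal (f k n (s n))) (ω : Filter ℕ)
          < ENNReal.ofReal ε) :
    ∃ t : ∀ n, X n, ∀ k : ℕ,
      Filter.limsup (fun n => ENNReal.ofReal (f k n (t n))) (ω : Filter ℕ)
        = 0 :=
  kirchberg_epsilon_test_general ω hω X f h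
end

section
/- Rokhlin-type combinatorics for the cyclic shift on a finite cyclic group: For any m ∈ ℕ and ε > 0, there exists ℓ ∈ ℕ such that the cyclic shift σ on ℤ/(ℓm+1) admits two 'towers': there exist pairwise disjoint subsets P₁, …, P_m, Q₁, …, Q_{m+1} of ℤ/(ℓm+1) whose union is all of ℤ/(ℓm+1), such that the shift maps P_k to P_{k+1} (indices mod m) and Q_k to Q_{k+1} (indices mod m+1) up to symmetric differences of cardinality at most ε·(ℓm+1). -/
/-!
Cut the cycle `ℤ/(ℓm+1)` into the interval `[0, (ℓ-1)m)`, tiled by `ℓ-1` blocks of length `m`,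
followed by one block `[(ℓ-1)m, ℓm+1)` of length `m+1`, and let the `k`-th level of each tower
be the `k`-th positions of its blocks. Inside an interval the shift moves position `k` of a block
to position `k+1`, or to position `0` of the next block, so a level is mapped onto the next one
except at the two endpoints of the interval. Each symmetric difference thus has at most two
points, which is at most `ε(ℓm+1)` once `ℓ > 2/ε`.
-/

open Finset

section BlockLevel

/-- The `k`-th level of the tower obtained by cutting `[s, t) ⊆ ℤ/N` (read through `ZMod.val`)
into consecutive blocks of length `h`. -/
def blockLevel (N h s t : ℕ) [NeZero N] (k : ZMod h) : Finset (ZMod N) :=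
  {x | s ≤ x.val ∧ x.val < t ∧ ((x.val - s : ℕ) : ZMod h) = k}

variable {N : ℕ} [NeZero N] {h s t : ℕ}

@[simp]
theorem mem_blockLevel {k : ZMod h} {x : ZMod N} :
    x ∈ blockLevel N h s t k ↔ s ≤ x.val ∧ x.val < t ∧ ((x.val - s : ℕ) : ZMod h) = k := by
  simp [blockLevel]

theorem disjoint_blockLevel_of_ne {k k' : ZMod h} (hk : k ≠ k') :
    Disjoint (blockLevel N h s t k) (blockLevel N h s t k') :=
  disjoint_left.2 fun _ hx hx' =>
    hk <| (mem_blockLevel.1 hx).2.2.symm.trans (mem_blockLevel.1 hx').2.2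

theorem disjoint_blockLevel_of_le {h' s' t' : ℕ} (hts : t ≤ s') (k : ZMod h) (k' : ZMod h') :
    Disjoint (blockLevel N h s t k) (blockLevel N h' s' t' k') := by
  refine disjoint_left.2 fun x hx hx' => ?_
  rw [mem_blockLevel] at hx hx'
  omega

theorem exists_mem_blockLevel {x : ZMod N} (hs : s ≤ x.val) (ht : x.val < t) :
    ∃ k, x ∈ blockLevel N h s t k :=
  ⟨_, mem_blockLevel.2 ⟨hs, ht, rfl⟩⟩

theorem symmDiff_image_add_one_blockLevel_subset (ht : t ≤ N) (k : ZMod h) :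
    symmDiff ((blockLevel N h s t k).image (· + 1)) (blockLevel N h s t (k + 1)) ⊆
      {(s : ZMod N), (t : ZMod N)} := by
  intro y hy
  rw [mem_insert, mem_singleton]
  rcases mem_symmDiff.1 hy with ⟨hy, hy'⟩ | ⟨hy, hy'⟩
  · obtain ⟨x, hx, rfl⟩ := mem_image.1 hy
    rw [mem_blockLevel] at hx
    have hx1 : x + 1 = ((x.val + 1 : ℕ) : ZMod N) := by
      rw [Nat.cast_succ, ZMod.natCast_zmod_val]
    by_cases hxt : x.val + 1 < t
    · refine absurd (mem_blockLevel.2 ?_) hy'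
      rw [hx1, ZMod.val_cast_of_lt (by omega), Nat.sub_add_comm hx.1, Nat.cast_succ, hx.2.2]
      exact ⟨by omega, hxt, rfl⟩
    · right
      rw [hx1, show x.val + 1 = t by omega]
  · rw [mem_blockLevel] at hy
    by_cases hys : y.val = s
    · left
      rw [← hys, ZMod.natCast_zmod_val]
    · have hyN := y.val_lt
      refine absurd (mem_image.2 ⟨((y.val - 1 : ℕ) : ZMod N), mem_blockLevel.2 ?_, ?_⟩) hy'
      · rw [ZMod.val_cast_of_lt (by omega)]
        refine ⟨by omega, by omega, ?_⟩
        rw [show y.val - 1 - s = y.val - s - 1 by omega, Nat.cast_pred (by omega), hy.2.2,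
          add_sub_cancel_right]
      · rw [← Nat.cast_add_one, Nat.sub_add_cancel (by omega), ZMod.natCast_zmod_val]

theorem card_symmDiff_image_add_one_blockLevel_le (ht : t ≤ N) (k : ZMod h) :
    #(symmDiff ((blockLevel N h s t k).image (· + 1)) (blockLevel N h s t (k + 1))) ≤ 2 :=
  (card_le_card (symmDiff_image_add_one_blockLevel_subset ht k)).trans card_le_two

end BlockLevel

/-- Rokhlin-type combinatorics for the cyclic shift on `ℤ/(ℓm+1)`: two towers
of heights `m` and `m+1` partitioning the cycle, approximately permuted by the
shift. -/
theorem cyclic_shift_rokhlin_towers (m : ℕ) (hm : 0 < m) (ε : ℝ) (hε : 0 < ε) :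
    ∃ ℓ : ℕ, 0 < ℓ ∧
      ∃ (P : ZMod m → Finset (ZMod (ℓ * m + 1)))
        (Q : ZMod (m + 1) → Finset (ZMod (ℓ * m + 1))),
        (∀ k k', k ≠ k' → Disjoint (P k) (P k')) ∧
        (∀ k k', k ≠ k' → Disjoint (Q k) (Q k')) ∧
        (∀ k k', Disjoint (P k) (Q k')) ∧
        (∀ x : ZMod (ℓ * m + 1), (∃ k, x ∈ P k) ∨ (∃ k, x ∈ Q k)) ∧
        (∀ k : ZMod m,
          ((symmDiff ((P k).image (· + 1)) (P (k + 1))).card : ℝ)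
            ≤ ε * (ℓ * m + 1)) ∧
        (∀ k : ZMod (m + 1),
          ((symmDiff ((Q k).image (· + 1)) (Q (k + 1))).card : ℝ)
            ≤ ε * (ℓ * m + 1)) := by
  obtain ⟨ℓ, hℓ⟩ := exists_nat_gt (2 / ε)
  have hℓpos : 0 < ℓ := by exact_mod_cast (div_pos two_pos hε).trans hℓ
  have two_le : (2 : ℝ) ≤ ε * (ℓ * m + 1) := by
    have : (ℓ : ℝ) ≤ ℓ * m + 1 := by
      nlinarith [(Nat.one_le_cast (α := ℝ)).2 hm, (Nat.cast_nonneg ℓ : (0 : ℝ) ≤ ℓ)]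
    rw [div_lt_iff₀' hε] at hℓ
    nlinarith
  set a := (ℓ - 1) * m
  have ha : a ≤ ℓ * m + 1 := by
    have := Nat.mul_le_mul_right m (Nat.sub_le ℓ 1)
    omega
  refine ⟨ℓ, hℓpos, blockLevel _ m 0 a, blockLevel _ (m + 1) a (ℓ * m + 1),
    fun _ _ => disjoint_blockLevel_of_ne, fun _ _ => disjoint_blockLevel_of_ne,
    disjoint_blockLevel_of_le le_rfl, fun x => ?_,
    fun k => le_trans ?_ two_le, fun k => le_trans ?_ two_le⟩
  · rcases lt_or_ge x.val a with hx | hx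
    · exact .inl (exists_mem_blockLevel (Nat.zero_le _) hx)
    · exact .inr (exists_mem_blockLevel hx x.val_lt)
  · exact_mod_cast card_symmDiff_image_add_one_blockLevel_le ha k
  · exact_mod_cast card_symmDiff_image_add_one_blockLevel_le le_rfl k
end

section
/- Let A be a unital C*-algebra and let φ be a tracial state on a crossed-product-like algebra containing A and a unitary u with u a u* = α(a). Suppose for given n ∈ ℕ, a ∈ A with ||a|| ≤ 1, d ∈ ℕ, and ε' > 0 there are positive contractions f_k^{(ℓ)} ∈ A (1 ≤ k ≤ p, 0 ≤ ℓ ≤ d, p = 2n) with ||Σ_{ℓ,k} f_k^{(ℓ)} − 1|| < ε' and ||(f_k^{(ℓ)})^{1/2} a α^n((f_k^{(ℓ)})^{1/2})|| < ε'. Then |φ(a uⁿ)| ≤ ((d+1)p + 1)ε'. -/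
open scoped ComplexOrder
open Finset

section Aux

set_option linter.unusedSectionVars false

variable {B : Type*} [NormedRing B] [StarRing B] [CStarRing B]
    [NormedAlgebra ℂ B] [StarModule ℂ B] [CompleteSpace B]

lemma aux_im_zero (φ : B →ₗ[ℂ] ℂ) (hφpos : ∀ x : B, 0 ≤ φ (star x * x)) (z : B) :
    (φ (star z * z)).im = 0 := by
  have h := hφpos z
  rw [Complex.le_def] at h
  simpa using h.2.symm

lemma aux_re_nonneg (φ : B →ₗ[ℂ] ℂ) (hφpos : ∀ x : B, 0 ≤ φ (star x * x)) (z : B) :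
    0 ≤ (φ (star z * z)).re := by
  have h := hφpos z
  rw [Complex.le_def] at h
  simpa using h.1

lemma aux_conj_symm (φ : B →ₗ[ℂ] ℂ) (hφpos : ∀ x : B, 0 ≤ φ (star x * x)) (x y : B) :
    (starRingEnd ℂ) (φ (star y * x)) = φ (star x * y) := by
  have h1 : (φ (star x * y)).im + (φ (star y * x)).im = 0 := by
    have e : star (x + y) * (x + y)
        = star x * x + (star x * y + (star y * x + star y * y)) := by
      rw [star_add]; noncomm_ring
    have h := aux_im_zero φ hφpos (x + y)
    rw [e] at h
    simp only [map_add, Complex.add_im, aux_im_zero φ hφpos] at h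
    linarith
  have h2 : (φ (star x * y)).re - (φ (star y * x)).re = 0 := by
    have hI : star Complex.I = -Complex.I := by
      rw [RCLike.star_def, Complex.conj_I]
    have e : star (x + Complex.I • y) * (x + Complex.I • y)
        = star x * x + (Complex.I • (star x * y)
            + ((-Complex.I) • (star y * x) + star y * y)) := by
      rw [star_add, star_smul, hI, add_mul, mul_add, mul_add]
      simp only [smul_mul_assoc, mul_smul_comm]
      match_scalars <;> simp [Complex.I_sq]
    have h := aux_im_zero φ hφpos (x + Complex.I • y)
    rw [e] at h
    simp only [map_add, map_smul, Complex.add_im, smul_eq_mul, Complex.mul_im,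
      aux_im_zero φ hφpos, Complex.I_re, Complex.I_im, Complex.neg_re, Complex.neg_im,
      zero_mul, one_mul, mul_zero, zero_add, add_zero, neg_zero, neg_mul] at h
    linarith
  apply Complex.ext
  · rw [Complex.conj_re]; linarith
  · rw [Complex.conj_im]; linarith

/-- The GNS-type inner product associated to a positive functional. -/
noncomputable def auxInner (φ : B →ₗ[ℂ] ℂ) : Inner ℂ B := ⟨fun v w => φ (star v * w)⟩

/-- The pre-inner-product core associated to a positive functional. -/
noncomputable def auxCore (φ : B →ₗ[ℂ] ℂ) (hφpos : ∀ x : B, 0 ≤ φ (star x * x)) :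
    PreInnerProductSpace.Core ℂ B :=
  { toInner := auxInner φ
    conj_inner_symm := fun v w =>
      show (starRingEnd ℂ) (φ (star w * v)) = φ (star v * w) from
        aux_conj_symm φ hφpos v w
    re_inner_nonneg := fun v => aux_re_nonneg φ hφpos v
    add_left := fun v w z =>
      show φ (star (v + w) * z) = φ (star v * z) + φ (star w * z) by
        rw [star_add, add_mul, map_add]
    smul_left := fun v w c =>
      show φ (star (c • v) * w) = (starRingEnd ℂ) c * φ (star v * w) by
        rw [star_smul, smul_mul_assoc, map_smul, smul_eq_mul, RCLike.star_def] }

/-- A positive unital linear functional on a C*-algebra is a contraction. -/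
lemma aux_abs_le (φ : B →ₗ[ℂ] ℂ) (hφ1 : φ 1 = 1)
    (hφpos : ∀ x : B, 0 ≤ φ (star x * x)) (x : B) :
    ‖φ x‖ ≤ ‖x‖ := by
  have hnt : Nontrivial B := by
    refine ⟨1, 0, fun h => ?_⟩
    rw [h, map_zero] at hφ1
    exact one_ne_zero hφ1.symm
  letI : CStarAlgebra B := {}
  letI : PartialOrder B := CStarAlgebra.spectralOrder B
  letI : StarOrderedRing B := CStarAlgebra.spectralOrderedRing B
  have hmono : ∀ y z : B, y ≤ z → φ y ≤ φ z := by
    intro y z h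
    rw [StarOrderedRing.le_iff] at h
    obtain ⟨p, hp, rfl⟩ := h
    rw [map_add, le_add_iff_nonneg_right]
    induction hp using AddSubmonoid.closure_induction with
    | mem s hs => obtain ⟨t, rfl⟩ := hs; exact hφpos t
    | zero => simp
    | add a b _ _ ha hb => rw [map_add]; exact add_nonneg ha hb
  have hbound : (φ (star x * x)).re ≤ ‖x‖ ^ 2 := by
    have hle := hmono _ _ (CStarAlgebra.star_mul_le_algebraMap_norm_sq (a := x))
    have halg : φ (algebraMap ℝ B (‖x‖ ^ 2)) = ((‖x‖ ^ 2 : ℝ) : ℂ) := by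
      rw [IsScalarTower.algebraMap_apply ℝ ℂ B, Algebra.algebraMap_eq_smul_one, map_smul,
        hφ1, smul_eq_mul, mul_one, Complex.coe_algebraMap]
    rw [halg, Complex.le_def] at hle
    have h := hle.1
    rw [Complex.ofReal_re] at h
    exact h
  have cs : ‖φ (star (1 : B) * x)‖ * ‖φ (star x * (1 : B))‖
      ≤ RCLike.re (φ (star (1 : B) * (1 : B))) * RCLike.re (φ (star x * x)) :=
    @InnerProductSpace.Core.inner_mul_inner_self_le ℂ B _ _ _ (auxCore φ hφpos) 1 x
  rw [star_one, one_mul, mul_one, one_mul] at cs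
  have hconj : ‖φ (star x)‖ = ‖φ x‖ := by
    have hcs := aux_conj_symm φ hφpos x 1
    rw [star_one, one_mul, mul_one] at hcs
    rw [← hcs, RCLike.norm_conj]
  rw [hφ1, hconj] at cs
  have hsq : ‖φ x‖ * ‖φ x‖ ≤ ‖x‖ * ‖x‖ := by
    calc ‖φ x‖ * ‖φ x‖ ≤ RCLike.re (1 : ℂ) * RCLike.re (φ (star x * x)) := cs
    _ = (φ (star x * x)).re := by simp
    _ ≤ ‖x‖ ^ 2 := hbound
    _ = ‖x‖ * ‖x‖ := sq ‖x‖
  exact nonneg_le_nonneg_of_sq_le_sq (norm_nonneg x) hsq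

end Aux

/-- The key Rokhlin-dimension trace estimate: given towers of positive
contractions `f_k^{(ℓ)}` (with square roots `r_k^{(ℓ)}`) almost summing to `1`
and almost orthogonalizing `a` against `αⁿ` (where `α = Ad u`), any tracial
state `φ` satisfies `|φ(a uⁿ)| ≤ ((d+1)p + 1) ε'`. -/
theorem trace_of_crossed_product_estimate
    {B : Type*} [NormedRing B] [StarRing B] [CStarRing B]
    [NormedAlgebra ℂ B] [StarModule ℂ B] [CompleteSpace B]
    (φ : B →ₗ[ℂ] ℂ)
    (hφ1 : φ 1 = 1)
    (hφpos : ∀ x : B, 0 ≤ φ (star x * x))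
    (hφtr : ∀ x y : B, φ (x * y) = φ (y * x))
    (u : B) (hu1 : star u * u = 1) (hu2 : u * star u = 1)
    (a : B) (ha : ‖a‖ ≤ 1)
    (n : ℕ) (hn : 0 < n) (d : ℕ) (p : ℕ) (hp : p = 2 * n)
    (ε' : ℝ) (hε' : 0 < ε')
    (f r : Fin (d + 1) → Fin p → B)
    (hfpos : ∀ l k, 0 ≤ φ (star (f l k) * (f l k)))
    (hfnorm : ∀ l k, ‖f l k‖ ≤ 1)
    (hrpos : ∀ l k, star (r l k) = r l k)
    (hrsq : ∀ l k, r l k * r l k = f l k)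
    (hsum : ‖(∑ l : Fin (d + 1), ∑ k : Fin p, f l k) - 1‖ < ε')
    (horth : ∀ l k,
      ‖r l k * a * (u ^ n * r l k * star (u ^ n))‖ < ε') :
    ‖φ (a * u ^ n)‖ ≤ ((d + 1) * p + 1) * ε' := by
  have hnt : Nontrivial B := by
    refine ⟨1, 0, fun h => ?_⟩
    rw [h, map_zero] at hφ1
    exact one_ne_zero hφ1.symm
  have habs : ∀ x : B, ‖φ x‖ ≤ ‖x‖ := aux_abs_le φ hφ1 hφpos
  have hun1 : star (u ^ n) * u ^ n = 1 := by
    have hmem : u ∈ unitary B := Unitary.mem_iff.mpr ⟨hu1, hu2⟩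
    exact (Unitary.mem_iff.mp (pow_mem hmem n)).1
  have hunorm : ‖u ^ n‖ ≤ 1 := by
    have h2 : ‖u ^ n‖ * ‖u ^ n‖ = 1 := by
      rw [← CStarRing.norm_star_mul_self, hun1, CStarRing.norm_one]
    nlinarith [norm_nonneg (u ^ n)]
  set S : B := ∑ l : Fin (d + 1), ∑ k : Fin p, f l k with hS
  have hsplit : φ (a * u ^ n)
      = φ (a * u ^ n * (1 - S)) + ∑ l : Fin (d + 1), ∑ k : Fin p, φ (a * u ^ n * f l k) := by
    have hmulS : a * u ^ n * S = ∑ l : Fin (d + 1), ∑ k : Fin p, a * u ^ n * f l k := by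
      rw [hS, Finset.mul_sum]
      exact Finset.sum_congr rfl fun l _ => Finset.mul_sum _ _ _
    rw [mul_sub, mul_one, map_sub, hmulS, map_sum]
    simp only [map_sum]
    ring
  have hterm : ∀ (l : Fin (d + 1)) (k : Fin p),
      ‖φ (a * u ^ n * f l k)‖ ≤ ε' := by
    intro l k
    have e1 : a * u ^ n * f l k = a * u ^ n * r l k * r l k := by
      rw [← hrsq]; simp only [mul_assoc]
    have e2 : φ (a * u ^ n * r l k * r l k) = φ (r l k * (a * u ^ n * r l k)) :=
      hφtr _ _
    have e3 : r l k * (a * u ^ n * r l k)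
        = r l k * a * (u ^ n * r l k * star (u ^ n)) * u ^ n := by
      simp only [mul_assoc, hun1, mul_one]
    calc ‖φ (a * u ^ n * f l k)‖
        = ‖φ (r l k * a * (u ^ n * r l k * star (u ^ n)) * u ^ n)‖ := by
          rw [e1, e2, e3]
      _ ≤ ‖r l k * a * (u ^ n * r l k * star (u ^ n)) * u ^ n‖ := habs _
      _ ≤ ‖r l k * a * (u ^ n * r l k * star (u ^ n))‖ * ‖u ^ n‖ := norm_mul_le _ _
      _ ≤ ε' * 1 := mul_le_mul (horth l k).le hunorm (norm_nonneg _) hε'.le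
      _ = ε' := mul_one ε'
  have hrest : ‖φ (a * u ^ n * (1 - S))‖ ≤ ε' := by
    calc ‖φ (a * u ^ n * (1 - S))‖ ≤ ‖a * u ^ n * (1 - S)‖ := habs _
      _ ≤ ‖a * u ^ n‖ * ‖1 - S‖ := norm_mul_le _ _
      _ ≤ ‖a‖ * ‖u ^ n‖ * ‖1 - S‖ := by
          gcongr
          exact norm_mul_le _ _
      _ ≤ 1 * 1 * ε' := by
          rw [norm_sub_rev]
          gcongr
      _ = ε' := by ring
  have hsum_abs : ‖∑ l : Fin (d + 1), ∑ k : Fin p, φ (a * u ^ n * f l k)‖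
      ≤ ∑ l : Fin (d + 1), ∑ k : Fin p, ‖φ (a * u ^ n * f l k)‖ :=
    le_trans (norm_sum_le _ _)
      (Finset.sum_le_sum fun l _ => norm_sum_le _ _)
  calc ‖φ (a * u ^ n)‖
      ≤ ‖φ (a * u ^ n * (1 - S))‖
        + ‖∑ l : Fin (d + 1), ∑ k : Fin p, φ (a * u ^ n * f l k)‖ := by
        rw [hsplit]; exact norm_add_le _ _
    _ ≤ ε' + ∑ l : Fin (d + 1), ∑ k : Fin p, ‖φ (a * u ^ n * f l k)‖ :=
        add_le_add hrest hsum_abs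
    _ ≤ ε' + ∑ _l : Fin (d + 1), ∑ _k : Fin p, ε' :=
        add_le_add le_rfl (Finset.sum_le_sum fun l _ =>
          Finset.sum_le_sum fun k _ => hterm l k)
    _ = ((d + 1) * p + 1) * ε' := by
        simp only [Finset.sum_const, Finset.card_univ, Fintype.card_fin, nsmul_eq_mul]
        push_cast
        ring
end

section
/- Let K be a compact Hausdorff space and m, p, N ∈ ℕ. Let g₁, …, g_N : K → [0,1] be continuous with Σ_j g_j = 1 (a partition of unity). Define h₀ ≡ 0 and h_j = p·Σ_{i=1}^j g_i for 1 ≤ j ≤ N, and for λ ∈ K set p_j(λ) := p_{h_j(λ)} − p_{h_{j−1}(λ)} ∈ M_p where p_t = diag(1,…,1, t−⌊t⌋, 0,…,0). Then for each j, the map λ ↦ p_j(λ) is norm-continuous from K to M_p, each p_j(λ) is a positive contraction, Σ_j p_j(λ) = 1_p, the normalized trace satisfies tr(p_j(λ)) = g_j(λ), and tr(p_i(λ)p_j(λ)) ≤ 1/(4p) for i ≠ j. -/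
/-!
For `t ≥ 0` the `i`-th diagonal entry of `p_t` is `min 1 (max 0 (t - i)) = min (i + 1) t - min i t`.
The first form makes `t ↦ p_t` continuous and monotone with entries in `[0, 1]`, the second
telescopes to `Tr p_t = t`. For `a ≤ b ≤ c ≤ d` the entries of `(p_b - p_a)(p_d - p_c)` are
bounded by `e (1 - e)` with `e` the entries of `p_b`, and at most one entry of `p_b` lies strictly
between `0` and `1`, so the trace of the product is at most `1/4`. Since `h_j` is monotone in `j`
with `h_0 = 0` and `h_N = p`, the `p_j(λ)` telescope to `p_p = 1`, and for `i < j` they are the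
cut-downs of the intervals `[h_{i-1}, h_i]` and `[h_{j-1}, h_j]`, which are in this order.
-/

open Finset

/-- Ozawa's diagonal positive contraction `p_t = diag(1,…,1, t−⌊t⌋, 0,…,0)`
with the fractional entry in position `⌊t⌋ + 1`. -/
noncomputable def ptDiag (p : ℕ) (t : ℝ) : Matrix (Fin p) (Fin p) ℝ :=
  Matrix.diagonal fun i =>
    if (i : ℕ) < ⌊t⌋₊ then 1 else if (i : ℕ) = ⌊t⌋₊ then t - ⌊t⌋₊ else 0

/-- The partial sums `h_j = p · Σ_{i ≤ j} g_i` of a partition of unity. -/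
noncomputable def partialSum {K : Type*} [TopologicalSpace K] {N : ℕ}
    (p : ℕ) (g : Fin N → C(K, ℝ)) (j : ℕ) (lam : K) : ℝ :=
  p * ∑ i ∈ Finset.univ.filter (fun i : Fin N => (i : ℕ) < j), g i lam

noncomputable def ptEntry (i : ℕ) (t : ℝ) : ℝ := min 1 (max 0 (t - i))

namespace ptEntry

variable (i : ℕ) {t : ℝ}

lemma nonneg (t : ℝ) : 0 ≤ ptEntry i t := le_min zero_le_one (le_max_left _ _)

lemma le_one (t : ℝ) : ptEntry i t ≤ 1 := min_le_left _ _

lemma monotone : Monotone (ptEntry i) := fun _ _ h =>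
  min_le_min le_rfl (max_le_max le_rfl (by linarith))

lemma continuous : Continuous (ptEntry i) := by
  unfold ptEntry; fun_prop

lemma eq_zero_of_le (h : t ≤ i) : ptEntry i t = 0 := by
  rw [ptEntry, max_eq_left (by linarith), min_eq_right zero_le_one]

lemma eq_one_of_add_one_le (h : (i : ℝ) + 1 ≤ t) : ptEntry i t = 1 := by
  rw [ptEntry, max_eq_right (by linarith), min_eq_left (by linarith)]

lemma eq_min_sub_min (t : ℝ) : ptEntry i t = min ((i : ℝ) + 1) t - min (i : ℝ) t := by
  simp only [ptEntry, min_def, max_def]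
  split_ifs <;> linarith

lemma mul_one_sub_eq_zero (h : i ≠ ⌊t⌋₊) : ptEntry i t * (1 - ptEntry i t) = 0 := by
  rcases h.lt_or_gt with h | h
  · have : (i : ℝ) + 1 ≤ t := by exact_mod_cast (Nat.le_floor_iff' i.succ_ne_zero).mp h
    rw [eq_one_of_add_one_le i this, sub_self, mul_zero]
  · have : t < i := (Nat.lt_floor_add_one t).trans_le (by exact_mod_cast h)
    rw [eq_zero_of_le i this.le, zero_mul]

end ptEntry

lemma sum_ptEntry {p : ℕ} {t : ℝ} (h0 : 0 ≤ t) (hp : t ≤ p) :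
    ∑ i : Fin p, ptEntry i t = t := by
  rw [Fin.sum_univ_eq_sum_range (fun i => ptEntry i t)]
  have htel := Finset.sum_range_sub (fun i : ℕ => min (i : ℝ) t) p
  push_cast at htel
  simp [ptEntry.eq_min_sub_min, htel, min_eq_right hp, h0]

lemma sum_ptEntry_mul_one_sub_le (p : ℕ) (t : ℝ) :
    ∑ i : Fin p, ptEntry i t * (1 - ptEntry i t) ≤ 1 / 4 := by
  have hterm (i : ℕ) : ptEntry i t * (1 - ptEntry i t) ≤ if i = ⌊t⌋₊ then 1 / 4 else 0 := by
    split_ifs with h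
    · nlinarith [sq_nonneg (ptEntry i t - 1 / 2)]
    · exact (ptEntry.mul_one_sub_eq_zero i h).le
  calc ∑ i : Fin p, ptEntry i t * (1 - ptEntry i t)
      ≤ ∑ i ∈ range p, if i = ⌊t⌋₊ then (1 / 4 : ℝ) else 0 := by
        rw [← Fin.sum_univ_eq_sum_range (fun i => if i = ⌊t⌋₊ then (1 / 4 : ℝ) else 0)]
        exact Finset.sum_le_sum fun i _ => hterm i
    _ ≤ 1 / 4 := by
        rw [Finset.sum_ite_eq']
        split_ifs <;> norm_num

section ptDiag

variable (p : ℕ) {a b c d t : ℝ}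

lemma ptDiag_eq_diagonal_ptEntry (ht : 0 ≤ t) :
    ptDiag p t = Matrix.diagonal fun i : Fin p => ptEntry i t := by
  refine congrArg Matrix.diagonal (funext fun i => ?_)
  rcases lt_trichotomy (i : ℕ) ⌊t⌋₊ with h | h | h
  · rw [if_pos h, ptEntry.eq_one_of_add_one_le]
    exact_mod_cast (Nat.le_floor_iff ht).mp h
  · rw [if_neg h.not_lt, if_pos h, ptEntry, h, max_eq_right (by linarith [Nat.floor_le ht]),
      min_eq_right (by linarith [Nat.lt_floor_add_one t])]
  · rw [if_neg (by omega), if_neg h.ne', ptEntry.eq_zero_of_le]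
    exact (Nat.lt_floor_add_one t).le.trans (by exact_mod_cast h)

lemma ptDiag_zero : ptDiag p 0 = 0 := by
  simp [ptDiag_eq_diagonal_ptEntry, ptEntry.eq_zero_of_le]

lemma ptDiag_natCast : ptDiag p p = 1 := by
  rw [ptDiag_eq_diagonal_ptEntry p p.cast_nonneg, ← Matrix.diagonal_one]
  refine congrArg Matrix.diagonal (funext fun i => ptEntry.eq_one_of_add_one_le i ?_)
  exact_mod_cast i.isLt

lemma continuousOn_ptDiag : ContinuousOn (ptDiag p) (Set.Ici 0) := by
  refine (continuous_pi fun i : Fin p => ptEntry.continuous i).matrix_diagonal.continuousOn.congr ?_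
  exact fun _ ht => ptDiag_eq_diagonal_ptEntry p (Set.mem_Ici.mp ht)

lemma trace_ptDiag (h0 : 0 ≤ t) (hp : t ≤ p) : (ptDiag p t).trace = t := by
  rw [ptDiag_eq_diagonal_ptEntry p h0, Matrix.trace_diagonal, sum_ptEntry h0 hp]

lemma ptDiag_sub_ptDiag (ha : 0 ≤ a) (hb : 0 ≤ b) :
    ptDiag p b - ptDiag p a = Matrix.diagonal fun i : Fin p => ptEntry i b - ptEntry i a := by
  rw [ptDiag_eq_diagonal_ptEntry p ha, ptDiag_eq_diagonal_ptEntry p hb, Matrix.diagonal_sub]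

lemma posSemidef_ptDiag_sub_ptDiag (ha : 0 ≤ a) (hab : a ≤ b) :
    (ptDiag p b - ptDiag p a).PosSemidef := by
  rw [ptDiag_sub_ptDiag p ha (ha.trans hab), Matrix.posSemidef_diagonal_iff]
  exact fun i => sub_nonneg.mpr (ptEntry.monotone i hab)

lemma posSemidef_one_sub_ptDiag_sub_ptDiag (ha : 0 ≤ a) (hb : 0 ≤ b) :
    (1 - (ptDiag p b - ptDiag p a)).PosSemidef := by
  rw [ptDiag_sub_ptDiag p ha hb, ← Matrix.diagonal_one, Matrix.diagonal_sub,
    Matrix.posSemidef_diagonal_iff]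
  intro i
  linarith [ptEntry.le_one i b, ptEntry.nonneg i a]

lemma trace_ptDiag_sub_mul_ptDiag_sub_le (ha : 0 ≤ a) (hab : a ≤ b) (hbc : b ≤ c)
    (hcd : c ≤ d) : ((ptDiag p b - ptDiag p a) * (ptDiag p d - ptDiag p c)).trace ≤ 1 / 4 := by
  have hb := ha.trans hab
  have hc := hb.trans hbc
  rw [ptDiag_sub_ptDiag p ha hb, ptDiag_sub_ptDiag p hc (hc.trans hcd),
    Matrix.diagonal_mul_diagonal, Matrix.trace_diagonal]
  refine (Finset.sum_le_sum fun i _ => ?_).trans (sum_ptEntry_mul_one_sub_le p b)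
  have hab' := ptEntry.monotone i hab
  have hbc' := ptEntry.monotone i hbc
  have hcd' := ptEntry.monotone i hcd
  exact mul_le_mul (by linarith [ptEntry.nonneg i a]) (by linarith [ptEntry.le_one i d])
    (by linarith) (ptEntry.nonneg i b)

end ptDiag

section partialSum

variable {K : Type*} [TopologicalSpace K] {N : ℕ} (p : ℕ) (g : Fin N → C(K, ℝ))

lemma partialSum_nonneg (hg0 : ∀ j lam, 0 ≤ g j lam) (j : ℕ) (lam : K) :
    0 ≤ partialSum p g j lam :=
  mul_nonneg p.cast_nonneg (Finset.sum_nonneg fun i _ => hg0 i lam)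

lemma partialSum_mono (hg0 : ∀ j lam, 0 ≤ g j lam) (lam : K) :
    Monotone fun j => partialSum p g j lam := fun j j' h =>
  mul_le_mul_of_nonneg_left
    (Finset.sum_le_sum_of_subset_of_nonneg (Finset.monotone_filter_right _ fun i hi => by omega)
      fun i _ _ => hg0 i lam) p.cast_nonneg

lemma partialSum_le (hg0 : ∀ j lam, 0 ≤ g j lam) (hgsum : ∀ lam, ∑ j, g j lam = 1)
    (j : ℕ) (lam : K) : partialSum p g j lam ≤ p := by
  have hle : ∑ i ∈ univ.filter (fun i : Fin N => (i : ℕ) < j), g i lam ≤ 1 :=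
    hgsum lam ▸ Finset.sum_le_sum_of_subset_of_nonneg (Finset.filter_subset _ _)
      fun i _ _ => hg0 i lam
  simpa [partialSum] using mul_le_mul_of_nonneg_left hle p.cast_nonneg

lemma partialSum_zero (lam : K) : partialSum p g 0 lam = 0 := by
  simp [partialSum]

lemma partialSum_top (hgsum : ∀ lam, ∑ j, g j lam = 1) (lam : K) :
    partialSum p g N lam = p := by
  rw [partialSum, Finset.filter_true_of_mem fun i _ => i.isLt, hgsum lam, mul_one]

lemma partialSum_succ (j : Fin N) (lam : K) :
    partialSum p g ((j : ℕ) + 1) lam = partialSum p g j lam + p * g j lam := by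
  have hins : univ.filter (fun i : Fin N => (i : ℕ) < j + 1)
      = insert j (univ.filter fun i : Fin N => (i : ℕ) < j) := by
    ext i
    simp only [Finset.mem_filter, Finset.mem_univ, true_and, Finset.mem_insert, Fin.ext_iff]
    omega
  rw [partialSum, partialSum, hins, Finset.sum_insert (by simp)]
  ring

lemma continuous_partialSum (j : ℕ) : Continuous (partialSum p g j) := by
  unfold partialSum
  fun_prop

lemma sum_ptDiag_partialSum_succ_sub (hgsum : ∀ lam, ∑ j, g j lam = 1) (lam : K) :
    ∑ j : Fin N, (ptDiag p (partialSum p g ((j : ℕ) + 1) lam) -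
      ptDiag p (partialSum p g j lam)) = 1 := by
  rw [Fin.sum_univ_eq_sum_range (fun j => ptDiag p (partialSum p g (j + 1) lam) -
      ptDiag p (partialSum p g j lam)),
    Finset.sum_range_sub (fun j => ptDiag p (partialSum p g j lam)),
    partialSum_top p g hgsum, partialSum_zero, ptDiag_natCast, ptDiag_zero, sub_zero]

end partialSum

theorem ozawa_partition_simulation_general
    {K : Type*} [TopologicalSpace K]
    (N p : ℕ) (hp : 0 < p)
    (g : Fin N → C(K, ℝ))
    (hg0 : ∀ j lam, 0 ≤ g j lam)
    (hgsum : ∀ lam, ∑ j, g j lam = 1) :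
    (∀ j : Fin N, Continuous fun lam =>
      ptDiag p (partialSum p g ((j : ℕ) + 1) lam) -
        ptDiag p (partialSum p g (j : ℕ) lam)) ∧
    (∀ (j : Fin N) (lam : K),
      (ptDiag p (partialSum p g ((j : ℕ) + 1) lam) -
        ptDiag p (partialSum p g (j : ℕ) lam)).PosSemidef ∧
      (1 - (ptDiag p (partialSum p g ((j : ℕ) + 1) lam) -
        ptDiag p (partialSum p g (j : ℕ) lam))).PosSemidef) ∧
    (∀ lam : K,
      ∑ j : Fin N, (ptDiag p (partialSum p g ((j : ℕ) + 1) lam) -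
        ptDiag p (partialSum p g (j : ℕ) lam)) = 1) ∧
    (∀ (j : Fin N) (lam : K),
      (ptDiag p (partialSum p g ((j : ℕ) + 1) lam) -
        ptDiag p (partialSum p g (j : ℕ) lam)).trace / p = g j lam) ∧
    (∀ (i j : Fin N), i ≠ j → ∀ lam : K,
      ((ptDiag p (partialSum p g ((i : ℕ) + 1) lam) -
          ptDiag p (partialSum p g (i : ℕ) lam)) *
        (ptDiag p (partialSum p g ((j : ℕ) + 1) lam) -
          ptDiag p (partialSum p g (j : ℕ) lam))).trace / p
        ≤ 1 / (4 * p)) := by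
  have hnn := partialSum_nonneg p g hg0
  have hmono := partialSum_mono p g hg0
  have hcont (j : ℕ) : Continuous fun lam => ptDiag p (partialSum p g j lam) :=
    (continuousOn_ptDiag p).comp_continuous (continuous_partialSum p g j) (hnn j)
  have hprod (i j : Fin N) (hij : i < j) (lam : K) :
      ((ptDiag p (partialSum p g ((i : ℕ) + 1) lam) - ptDiag p (partialSum p g i lam)) *
        (ptDiag p (partialSum p g ((j : ℕ) + 1) lam) - ptDiag p (partialSum p g j lam))).trace
        ≤ 1 / 4 :=
    trace_ptDiag_sub_mul_ptDiag_sub_le p (hnn _ lam) (hmono lam (Nat.le_succ _))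
      (hmono lam (Nat.succ_le_of_lt hij)) (hmono lam (Nat.le_succ _))
  refine ⟨fun j => (hcont _).sub (hcont _),
    fun j lam => ⟨posSemidef_ptDiag_sub_ptDiag p (hnn _ lam) (hmono lam (Nat.le_succ _)),
      posSemidef_one_sub_ptDiag_sub_ptDiag p (hnn _ lam) (hnn _ lam)⟩,
    sum_ptDiag_partialSum_succ_sub p g hgsum, fun j lam => ?_, fun i j hij lam => ?_⟩
  · have hle := partialSum_le p g hg0 hgsum
    rw [Matrix.trace_sub, trace_ptDiag p (hnn _ lam) (hle _ lam),
      trace_ptDiag p (hnn _ lam) (hle _ lam), partialSum_succ, add_sub_cancel_left,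
      mul_div_cancel_left₀ _ (Nat.cast_ne_zero.mpr hp.ne')]
  · rw [← div_div]
    refine div_le_div_of_nonneg_right ?_ p.cast_nonneg
    rcases hij.lt_or_gt with h | h
    · exact hprod i j h lam
    · rw [Matrix.trace_mul_comm]
      exact hprod j i h lam

/-- Ozawa's matrix-valued simulation of a partition of unity: the interval
cut-downs `p_j(λ) = p_{h_j(λ)} − p_{h_{j−1}(λ)}` are norm-continuous positive
contractions summing to `1`, with normalized traces `g_j(λ)` and pairwise
products of normalized trace at most `1/(4p)`. -/
theorem ozawa_partition_simulation
    {K : Type*} [TopologicalSpace K] [CompactSpace K] [T2Space K]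
    (N p : ℕ) (hp : 0 < p)
    (g : Fin N → C(K, ℝ))
    (hg0 : ∀ j lam, 0 ≤ g j lam) (hg1 : ∀ j lam, g j lam ≤ 1)
    (hgsum : ∀ lam, ∑ j, g j lam = 1) :
    (∀ j : Fin N, Continuous fun lam =>
      ptDiag p (partialSum p g ((j : ℕ) + 1) lam) -
        ptDiag p (partialSum p g (j : ℕ) lam)) ∧
    (∀ (j : Fin N) (lam : K),
      (ptDiag p (partialSum p g ((j : ℕ) + 1) lam) -
        ptDiag p (partialSum p g (j : ℕ) lam)).PosSemidef ∧
      (1 - (ptDiag p (partialSum p g ((j : ℕ) + 1) lam) -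
        ptDiag p (partialSum p g (j : ℕ) lam))).PosSemidef) ∧
    (∀ lam : K,
      ∑ j : Fin N, (ptDiag p (partialSum p g ((j : ℕ) + 1) lam) -
        ptDiag p (partialSum p g (j : ℕ) lam)) = 1) ∧
    (∀ (j : Fin N) (lam : K),
      (ptDiag p (partialSum p g ((j : ℕ) + 1) lam) -
        ptDiag p (partialSum p g (j : ℕ) lam)).trace / p = g j lam) ∧
    (∀ (i j : Fin N), i ≠ j → ∀ lam : K,
      ((ptDiag p (partialSum p g ((i : ℕ) + 1) lam) -
          ptDiag p (partialSum p g (i : ℕ) lam)) *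
        (ptDiag p (partialSum p g ((j : ℕ) + 1) lam) -
          ptDiag p (partialSum p g (j : ℕ) lam))).trace / p
        ≤ 1 / (4 * p)) :=
  ozawa_partition_simulation_general N p hp g hg0 hgsum
end
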